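/- Assume K is algebraically closed (of characteristic zero). Let t ∈ K satisfy ‖t‖ < 1 and ‖t‖⁶ > 5⁻⁵ (i.e. 0 < v₅(t) < 5/6), and let ψ₅ ∈ K[X] be the 5-division polynomial of the Weierstrass curve E_t : y² = x³ + t·x + 1, a polynomial of degree 12 with leading coefficient 5 whose roots are the x-coordinates of the points of exact order 5. Then in the multiset of the 12 roots of ψ₅ in K (with multiplicity), exactly 10 roots x satisfy ‖x‖¹⁰ · ‖t‖ = 1, and exactly 2 roots x satisfy ‖x‖² = 5·‖t‖. (The latter two x-values are the x-coordinates of the nonzero points of the canonical subgroup of E_t.) -/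

import Mathlib

/-!
The coefficients `cⱼ` of `ψ₅` satisfy `‖c₁₂‖ = 1/5`, `‖c₁₀‖ = ‖t‖`, `c₁₁ = 0`, `‖c₀‖ = 1`, and
`‖cⱼ‖ < min 1 ‖t‖` otherwise. At a root `x` the ultrametric inequality forces the largest of the
terms `‖cⱼ xʲ‖` to be attained twice, and as `5⁵‖t‖⁶ > 1` this leaves two cases (the two segments
of the Newton polygon): `‖c₀‖ = ‖c₁₀ x¹⁰‖`, i.e. `‖x‖¹⁰‖t‖ = 1`, or `‖c₁₀ x¹⁰‖ = ‖c₁₂ x¹²‖`, i.e.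
`‖x‖² = 5‖t‖`. The absolute values of the twelve roots multiply to `‖c₀‖ / ‖c₁₂‖ = 5`, and this
pins down the number of roots of each kind.
-/

open Polynomial

section Nonarchimedean

variable {R : Type*} [CommRing R] {v : AbsoluteValue R ℝ}

def IsNonarchimedean.integers [Nontrivial R] (hna : IsNonarchimedean v) : Subring R where
  carrier := {x | v x ≤ 1}
  mul_mem' {x y} hx hy := by
    simp only [Set.mem_ofPred_eq, map_mul] at *
    exact mul_le_one₀ hx (v.nonneg y) hy
  one_mem' := by simp
  add_mem' hx hy := (hna _ _).trans (max_le hx hy)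
  zero_mem' := by simp
  neg_mem' := by simp

theorem Polynomial.IsRoot.abv_coeff_mul_pow_eq_zero_of_forall_lt (hna : IsNonarchimedean v)
    {p : R[X]} {x : R} (hx : p.IsRoot x) {i : ℕ} (hi : i ≤ p.natDegree)
    (hdom : ∀ j ≤ p.natDegree, j ≠ i → v (p.coeff j * x ^ j) < v (p.coeff i * x ^ i)) :
    v (p.coeff i * x ^ i) = 0 := by
  rw [← hna.apply_sum_eq_of_lt (fun y => (v.map_neg y).symm) (Finset.mem_range_succ_iff.2 hi)
    (fun j hj => hdom j (Finset.mem_range_succ_iff.1 hj)), ← eval_eq_sum_range, hx.eq_zero,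
    map_zero]

end Nonarchimedean

theorem Polynomial.Splits.abv_coeff_zero_eq_mul_prod_roots {K : Type*} [Field K]
    {v : AbsoluteValue K ℝ} {p : K[X]} (hp : p.Splits) :
    v (p.coeff 0) = v p.leadingCoeff * (p.roots.map v).prod := by
  rw [hp.coeff_zero_eq_leadingCoeff_mul_prod_roots, map_mul, map_mul, map_pow, v.map_neg,
    map_one, one_pow, one_mul, map_multiset_prod]

section PadicRestriction

variable {K : Type*} [Field K] {v : AbsoluteValue K ℝ} {p : ℕ} [Fact p.Prime]

theorem abv_prime_eq_inv (hQ : ∀ q : ℚ, v (q : K) = padicNorm p q) : v (p : K) = (p : ℝ)⁻¹ := by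
  have := hQ p
  rw [Rat.cast_natCast, padicNorm.padicNorm_p_of_prime] at this
  simpa using this

theorem abv_natCast_eq_one_of_not_dvd (hQ : ∀ q : ℚ, v (q : K) = padicNorm p q) {n : ℕ}
    (hn : ¬ p ∣ n) : v (n : K) = 1 := by
  have := hQ n
  rw [Rat.cast_natCast, (padicNorm.nat_eq_one_iff n).2 hn] at this
  exact_mod_cast this

end PadicRestriction

theorem mul_pow_lt_max_one_mul_pow {c a X : ℝ} {j n : ℕ} (hc : 0 ≤ c) (hc1 : c < 1)
    (hca : c < a) (hX : 0 ≤ X) (hj : j ≤ n) : c * X ^ j < max 1 (a * X ^ n) := by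
  rcases le_or_gt X 1 with hX1 | hX1
  · exact lt_max_of_lt_left <|
      (mul_le_of_le_one_right hc (pow_le_one₀ hX hX1)).trans_lt hc1
  · refine lt_max_of_lt_right ?_
    calc c * X ^ j ≤ c * X ^ n := by gcongr; exact hX1.le
      _ < a * X ^ n := by gcongr

theorem pow_ten_mul_eq_one_or_sq_eq_five_mul {a X : ℝ} (ha : 0 < a) (hX : 0 ≤ X)
    (hq : 1 < 5 ^ 5 * a ^ 6) (h0 : 1 ≤ a * X ^ 10 ∨ 1 ≤ X ^ 12 / 5)
    (h10 : a * X ^ 10 ≤ 1 ∨ a * X ^ 10 ≤ X ^ 12 / 5)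
    (h12 : X ^ 12 / 5 ≤ 1 ∨ X ^ 12 / 5 ≤ a * X ^ 10) :
    X ^ 10 * a = 1 ∨ X ^ 2 = 5 * a := by
  rcases lt_trichotomy (X ^ 2) (5 * a) with hlt | heq | hgt
  · left
    have hle : X ^ 12 / 5 ≤ a * X ^ 10 := by nlinarith [pow_nonneg hX 10]
    have hge : 1 ≤ a * X ^ 10 := h0.elim id (fun h => h.trans hle)
    have hX0 : 0 < X := by
      rcases hX.lt_or_eq with h | h
      · exact h
      · subst h; simp at hge; linarith
    have hle' : a * X ^ 10 ≤ 1 := h10.resolve_right (by nlinarith [pow_pos hX0 10])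
    linarith
  · exact Or.inr heq
  · exfalso
    have hX0 : 0 < X := by nlinarith
    have hlt : a * X ^ 10 < X ^ 12 / 5 := by nlinarith [pow_pos hX0 10]
    have h6 : (5 * a) ^ 6 < (X ^ 2) ^ 6 := by gcongr
    rcases h12 with h | h <;> nlinarith

theorem Polynomial.IsRoot.abv_pow_ten_mul_eq_one_or_sq_eq_five_mul {K : Type*} [Field K]
    {v : AbsoluteValue K ℝ} (hna : IsNonarchimedean v) {p : K[X]} (hdeg : p.natDegree = 12)
    {a : ℝ} (hq : 1 < 5 ^ 5 * a ^ 6) (h0 : v (p.coeff 0) = 1) (h10 : v (p.coeff 10) = a)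
    (h11 : p.coeff 11 = 0) (h12 : v (p.coeff 12) = 1 / 5)
    (hminor : ∀ j, 1 ≤ j → j ≤ 9 → v (p.coeff j) < 1 ∧ v (p.coeff j) < a)
    {x : K} (hx : p.IsRoot x) : v x ^ 10 * a = 1 ∨ v x ^ 2 = 5 * a := by
  set X := v x
  set T : ℕ → ℝ := fun j => v (p.coeff j * x ^ j)
  have hT0 : T 0 = 1 := by simp [T, h0]
  have hT10 : T 10 = a * X ^ 10 := by simp [T, h10, X]
  have hT12 : T 12 = X ^ 12 / 5 := by simp [T, h12, X]; ring
  have ha : 0 < a := by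
    rcases (h10 ▸ v.nonneg _ : 0 ≤ a).lt_or_eq with h | h
    · exact h
    · subst h; norm_num at hq
  have hminorT : ∀ j ≤ 12, j ≠ 0 → j ≠ 10 → j ≠ 12 → T j < max 1 (a * X ^ 10) := by
    intro j hj12 hj0 hj10 hj12'
    by_cases hj11 : j = 11
    · simp [T, hj11, h11]
    · obtain ⟨hj1, hja⟩ := hminor j (by omega) (by omega)
      simpa [T] using
        mul_pow_lt_max_one_mul_pow (v.nonneg _) hj1 hja (v.nonneg x) (by omega : j ≤ 10)
  have not_dominant : ∀ i ∈ ({0, 10, 12} : Finset ℕ),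
      (∀ j ∈ ({0, 10, 12} : Finset ℕ), j ≠ i → T j < T i) → False := by
    intro i hi hlt
    have hle : ∀ j ∈ ({0, 10, 12} : Finset ℕ), T j ≤ T i := fun j hj =>
      (eq_or_ne j i).elim (fun h => h ▸ le_rfl) (fun h => (hlt j hj h).le)
    have hmax : max 1 (a * X ^ 10) ≤ T i :=
      max_le (hT0 ▸ hle 0 (by simp)) (hT10 ▸ hle 10 (by simp))
    have hzero : T i = 0 := by
      refine hx.abv_coeff_mul_pow_eq_zero_of_forall_lt hna (by simp at hi; omega)
        fun j hj hji => ?_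
      by_cases hjS : j ∈ ({0, 10, 12} : Finset ℕ)
      · exact hlt j hjS hji
      · simp only [Finset.mem_insert, Finset.mem_singleton, not_or] at hjS
        exact (hminorT j (hdeg ▸ hj) hjS.1 hjS.2.1 hjS.2.2).trans_le hmax
    linarith [le_max_left 1 (a * X ^ 10)]
  refine pow_ten_mul_eq_one_or_sq_eq_five_mul ha (v.nonneg x) hq ?_ ?_ ?_
  · by_contra! h
    exact not_dominant 0 (by simp) (by simp [hT0, hT10, hT12, h.1, h.2])
  · by_contra! h
    exact not_dominant 10 (by simp) (by simp [hT0, hT10, hT12, h.1, h.2])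
  · by_contra! h
    exact not_dominant 12 (by simp) (by simp [hT0, hT10, hT12, h.1, h.2])

theorem card_filter_eq_ten_and_card_filter_eq_two {s : Multiset ℝ} {a : ℝ} (ha : 0 < a)
    (hq : 1 < 5 ^ 5 * a ^ 6) (hcard : Multiset.card s = 12) (hprod : s.prod = 5)
    (hs : ∀ r ∈ s, r ^ 10 * a = 1 ∨ r ^ 2 = 5 * a) :
    Multiset.card (s.filter fun r => r ^ 10 * a = 1) = 10 ∧
      Multiset.card (s.filter fun r => r ^ 2 = 5 * a) = 2 := by
  set A := s.filter fun r => r ^ 10 * a = 1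
  set B := s.filter fun r => r ^ 2 = 5 * a
  have hsplit : A + B = s := by
    convert Multiset.filter_add_not (fun r => r ^ 10 * a = 1) s using 2
    refine Multiset.filter_congr fun r hr => ⟨fun h h' => ?_, (hs r hr).resolve_left⟩
    have : (5 * a) ^ 5 * a = 1 := by rw [← h, ← h']; ring
    nlinarith
  have hcardAB : Multiset.card A + Multiset.card B = 12 := by
    rw [← Multiset.card_add, hsplit, hcard]
  have hpowA : (A.map (· ^ 10)).prod = a⁻¹ ^ Multiset.card A := by
    rw [Multiset.map_congr rfl fun r hr =>
        eq_inv_of_mul_eq_one_left (Multiset.of_mem_filter (p := fun r => r ^ 10 * a = 1) hr),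
      Multiset.map_const', Multiset.prod_replicate]
  have hpowB : (B.map (· ^ 10)).prod = ((5 * a) ^ 5) ^ Multiset.card B := by
    rw [Multiset.map_congr rfl fun r hr => by
        rw [show 10 = 2 * 5 from rfl, pow_mul, Multiset.of_mem_filter hr],
      Multiset.map_const', Multiset.prod_replicate]
  have h510 : a⁻¹ ^ Multiset.card A * ((5 * a) ^ 5) ^ Multiset.card B = 5 ^ 10 := by
    rw [← hpowA, ← hpowB, ← Multiset.prod_add, ← Multiset.map_add, hsplit,
      Multiset.prod_map_pow, Multiset.map_id', hprod]
  have hinvA : a⁻¹ ^ Multiset.card A = a ^ Multiset.card B / a ^ 12 := by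
    rw [← hcardAB, pow_add, inv_pow]
    field_simp
  have hB : (5 ^ 5 * a ^ 6) ^ Multiset.card B = (5 ^ 5 * a ^ 6) ^ 2 := by
    calc (5 ^ 5 * a ^ 6) ^ Multiset.card B
        = ((5 * a) ^ 5) ^ Multiset.card B * a ^ Multiset.card B := by rw [← mul_pow]; ring
      _ = (5 ^ 5 * a ^ 6) ^ 2 := by
          have : ((5 * a) ^ 5) ^ Multiset.card B = 5 ^ 10 * a ^ 12 / a ^ Multiset.card B := by
            rw [← h510, hinvA]
            field_simp
          rw [this]
          field_simp
  have hB2 : Multiset.card B = 2 := pow_right_injective₀ (by positivity) hq.ne' hB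
  exact ⟨by omega, hB2⟩

/-- The `5`-division polynomial of `y² = x³ + t x + 1`. -/
noncomputable def divPoly5 {K : Type*} [Field K] (t : K) : K[X] :=
  C 5 * X ^ 12 + C (62 * t) * X ^ 10 + C 380 * X ^ 9 + C (-105 * t ^ 2) * X ^ 8 +
    C (240 * t) * X ^ 7 + C (-300 * t ^ 3 - 240) * X ^ 6 + C (-696 * t ^ 2) * X ^ 5 +
    C (-125 * t ^ 4 - 1920 * t) * X ^ 4 + C (-80 * t ^ 3 - 1600) * X ^ 3 +
    C (-50 * t ^ 5 - 240 * t ^ 2) * X ^ 2 + C (-100 * t ^ 4 - 640 * t) * X +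
    C (t ^ 6 - 32 * t ^ 3 - 256)

section divPoly5

variable {K : Type*} [Field K] (t : K)

theorem divPoly5_coeff_zero : (divPoly5 t).coeff 0 = t ^ 6 - 32 * t ^ 3 - 256 := by
  simp only [divPoly5, coeff_add, coeff_C_mul_X_pow, coeff_C_mul_X, coeff_C]
  norm_num

theorem divPoly5_coeff_ten : (divPoly5 t).coeff 10 = 62 * t := by
  simp only [divPoly5, coeff_add, coeff_C_mul_X_pow, coeff_C_mul_X, coeff_C]
  norm_num

theorem divPoly5_coeff_eleven : (divPoly5 t).coeff 11 = 0 := by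
  simp only [divPoly5, coeff_add, coeff_C_mul_X_pow, coeff_C_mul_X, coeff_C]
  norm_num

theorem divPoly5_coeff_twelve : (divPoly5 t).coeff 12 = 5 := by
  simp only [divPoly5, coeff_add, coeff_C_mul_X_pow, coeff_C_mul_X, coeff_C]
  norm_num

variable [CharZero K]

theorem divPoly5_natDegree : (divPoly5 t).natDegree = 12 := by
  unfold divPoly5
  compute_degree!

theorem divPoly5_leadingCoeff : (divPoly5 t).leadingCoeff = 5 := by
  rw [leadingCoeff, divPoly5_natDegree, divPoly5_coeff_twelve]

end divPoly5

section divPoly5Abv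

variable {K : Type*} [Field K] {v : AbsoluteValue K ℝ} {t : K}

theorem abv_divPoly5_coeff_zero (hna : IsNonarchimedean v) (h256 : v 256 = 1) (ht : v t < 1) :
    v ((divPoly5 t).coeff 0) = 1 := by
  have h32 : v (32 : K) ≤ 1 := by simpa using hna.apply_natCast_le_one (n := 32)
  have hlt : v (t ^ 6 - 32 * t ^ 3) < v (-256) := by
    rw [v.map_neg, h256, sub_eq_add_neg]
    refine (hna _ _).trans_lt (max_lt ?_ ?_)
    · simpa using pow_lt_one₀ (v.nonneg t) ht (by norm_num : 6 ≠ 0)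
    · rw [v.map_neg, map_mul, map_pow]
      exact (mul_le_of_le_one_left (by positivity) h32).trans_lt
        (pow_lt_one₀ (v.nonneg t) ht (by norm_num))
  rw [divPoly5_coeff_zero, sub_eq_add_neg _ (256 : K), hna.add_eq_right_of_lt hlt, v.map_neg,
    h256]

theorem abv_divPoly5_coeff_le [CharZero K] (hna : IsNonarchimedean v) (h5 : v 5 = 1 / 5)
    (ht : v t ≤ 1) {j : ℕ} (hj1 : 1 ≤ j) (hj9 : j ≤ 9) :
    v ((divPoly5 t).coeff j) ≤ max (1 / 5) (v t ^ 2) := by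
  have htO : t ∈ hna.integers := ht
  by_cases hj5 : j = 5
  · subst hj5
    have h696 : v (696 : K) ≤ 1 := by simpa using hna.apply_natCast_le_one (n := 696)
    simp only [divPoly5, coeff_add, coeff_C_mul_X_pow, coeff_C_mul_X, coeff_C]
    norm_num
    exact Or.inr (mul_le_of_le_one_left (by positivity) h696)
  · -- every other coefficient is `5` times an integral polynomial in `t`
    have hmem : (divPoly5 t).coeff j / 5 ∈ hna.integers := by
      interval_cases j <;>
        simp only [divPoly5, coeff_add, coeff_C_mul_X_pow, coeff_C_mul_X, coeff_C] <;>
        norm_num <;> ring_nf <;> aesop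
    calc v ((divPoly5 t).coeff j) = v 5 * v ((divPoly5 t).coeff j / 5) := by
          rw [← map_mul, mul_div_cancel₀ _ (by norm_num)]
      _ ≤ 1 / 5 := by rw [h5]; exact mul_le_of_le_one_right (by norm_num) hmem
      _ ≤ _ := le_max_left _ _

theorem abv_pow_ten_mul_eq_one_or_sq_eq_of_isRoot_divPoly5 [CharZero K]
    (hna : IsNonarchimedean v) (h5 : v 5 = 1 / 5) (h62 : v 62 = 1) (h256 : v 256 = 1)
    (ht : v t < 1) (hq : 1 < 5 ^ 5 * v t ^ 6) {x : K} (hx : (divPoly5 t).IsRoot x) :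
    v x ^ 10 * v t = 1 ∨ v x ^ 2 = 5 * v t := by
  have ht₀ : 0 < v t := v.pos fun h => by norm_num [h] at hq
  have ht₅ : 1 / 5 < v t := by
    by_contra! h
    nlinarith [pow_le_pow_left₀ (by positivity) (by linarith : 5 * v t ≤ 1) 6]
  refine hx.abv_pow_ten_mul_eq_one_or_sq_eq_five_mul hna (divPoly5_natDegree t) hq
    (abv_divPoly5_coeff_zero hna h256 ht) (by rw [divPoly5_coeff_ten, map_mul, h62, one_mul])
    (divPoly5_coeff_eleven t) (by rw [divPoly5_coeff_twelve, h5]) fun j hj1 hj9 => ?_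
  have hle := abv_divPoly5_coeff_le hna h5 ht.le hj1 hj9
  exact ⟨hle.trans_lt (max_lt (by norm_num) (pow_lt_one₀ ht₀.le ht (by norm_num))),
    hle.trans_lt (max_lt ht₅ (pow_lt_self_of_lt_one₀ ht₀ ht (by norm_num)))⟩

theorem prod_map_abv_roots_divPoly5 [CharZero K] [IsAlgClosed K] (hna : IsNonarchimedean v)
    (h5 : v 5 = 1 / 5) (h256 : v 256 = 1) (ht : v t < 1) :
    ((divPoly5 t).roots.map v).prod = 5 := by
  have := (IsAlgClosed.splits (divPoly5 t)).abv_coeff_zero_eq_mul_prod_roots (v := v)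
  rw [abv_divPoly5_coeff_zero hna h256 ht, divPoly5_leadingCoeff, h5] at this
  linarith

end divPoly5Abv

open Polynomial in
open scoped Classical in
/-- For `0 < v₅(t) < 5/6` (i.e. `‖t‖ < 1` and `‖t‖⁶ > 5⁻⁵`), the 5-division
polynomial of `E_t : y² = x³ + tx + 1` has 12 roots (with multiplicity), of which
exactly 10 satisfy `‖x‖¹⁰·‖t‖ = 1` and exactly 2 (the `x`-coordinates of the
nonzero points of the canonical subgroup) satisfy `‖x‖² = 5‖t‖`. -/
theorem div_poly_roots_canonical_subgroup {K : Type*} [Field K] [CharZero K]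
    [IsAlgClosed K] (v : AbsoluteValue K ℝ) (hna : IsNonarchimedean v)
    (hQ : ∀ q : ℚ, v (q : K) = (padicNorm 5 q : ℝ))
    (t : K) (ht₁ : v t < 1) (ht₂ : (5 : ℝ)⁻¹ ^ 5 < v t ^ 6) :
    ∀ ψ₅ : K[X],
      ψ₅ = C 5 * X ^ 12 + C (62 * t) * X ^ 10 + C 380 * X ^ 9 + C (-105 * t ^ 2) * X ^ 8 +
        C (240 * t) * X ^ 7 + C (-300 * t ^ 3 - 240) * X ^ 6 + C (-696 * t ^ 2) * X ^ 5 +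
        C (-125 * t ^ 4 - 1920 * t) * X ^ 4 + C (-80 * t ^ 3 - 1600) * X ^ 3 +
        C (-50 * t ^ 5 - 240 * t ^ 2) * X ^ 2 + C (-100 * t ^ 4 - 640 * t) * X +
        C (t ^ 6 - 32 * t ^ 3 - 256) →
      Multiset.card ψ₅.roots = 12 ∧
      Multiset.card (ψ₅.roots.filter fun x => v x ^ 10 * v t = 1) = 10 ∧
      Multiset.card (ψ₅.roots.filter fun x => v x ^ 2 = 5 * v t) = 2 := by
  rintro ψ₅ (rfl : ψ₅ = divPoly5 t)
  have : Fact (Nat.Prime 5) := ⟨by norm_num⟩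
  have h5 : v 5 = 1 / 5 := by simpa using abv_prime_eq_inv (p := 5) hQ
  have h62 : v 62 = 1 := by simpa using abv_natCast_eq_one_of_not_dvd hQ (n := 62) (by norm_num)
  have h256 : v 256 = 1 := by
    simpa using abv_natCast_eq_one_of_not_dvd hQ (n := 256) (by norm_num)
  have hq : 1 < 5 ^ 5 * v t ^ 6 := by
    rwa [inv_pow, inv_lt_iff_one_lt_mul₀' (by positivity)] at ht₂
  have hcard : Multiset.card (divPoly5 t).roots = 12 := by
    rw [splits_iff_card_roots.1 (IsAlgClosed.splits _), divPoly5_natDegree]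
  obtain ⟨h10, h2⟩ := card_filter_eq_ten_and_card_filter_eq_two
    (v.pos fun h => by norm_num [h] at hq) hq (by rw [Multiset.card_map, hcard])
    (prod_map_abv_roots_divPoly5 hna h5 h256 ht₁)
    (Multiset.forall_mem_map_iff.2 fun x hx =>
      abv_pow_ten_mul_eq_one_or_sq_eq_of_isRoot_divPoly5 hna h5 h62 h256 ht₁ hq
        (isRoot_of_mem_roots hx))
  rw [Multiset.filter_map, Multiset.card_map] at h10 h2
  exact ⟨hcard, h10, h2⟩
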